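/- For every TRS R over a signature Σ, each of the relations →∞, ∞→ and =∞ is reflexive and transitive, and the relation =∞ is moreover symmetric (hence an equivalence relation on T). -/

import Mathlib

open Relation

/-- A signature: a type of function symbols together with an arity for each symbol. -/
structure Signature where
  Sym : Type
  ar : Sym → ℕ

/-- The polynomial functor whose final coalgebra is the set of (finite and infinite)
terms over the signature `Sg` and the set `X` of variables. -/
def TermF (Sg : Signature) (X : Type) : PFunctor.{0} :=
  ⟨X ⊕ Sg.Sym, fun a => Sum.rec (fun _ => Empty) (fun f => Fin (Sg.ar f)) a⟩

/-- The set `T` of finite and infinite terms over `Sg` and `X`, defined coinductively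
(as the final coalgebra, i.e. the M-type, of `TermF Sg X`). -/
def Tm (Sg : Signature) (X : Type) : Type := PFunctor.M (TermF Sg X)

variable {Sg : Signature} {X : Type}

/-- The term consisting of a single variable. -/
def Tm.var (x : X) : Tm Sg X := PFunctor.M.mk ⟨Sum.inl x, Empty.elim⟩

/-- The term `f(t₁,…,tₙ)` with root symbol `f` and arguments `args`. -/
def Tm.node (f : Sg.Sym) (args : Fin (Sg.ar f) → Tm Sg X) : Tm Sg X :=
  PFunctor.M.mk ⟨Sum.inr f, args⟩

/-- One step of the corecursive definition of substitution:
`Sum.inl t` means `t` still has to be substituted, `Sum.inr t` means `t` is copied. -/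
def substAux (σ : X → Tm Sg X) :
    (Tm Sg X ⊕ Tm Sg X) → (TermF Sg X) (Tm Sg X ⊕ Tm Sg X) := fun s =>
  match s with
  | Sum.inl t =>
    match PFunctor.M.dest t with
    | ⟨Sum.inl x, _⟩ =>
        ⟨(PFunctor.M.dest (σ x)).1, fun b => Sum.inr ((PFunctor.M.dest (σ x)).2 b)⟩
    | ⟨Sum.inr f, k⟩ => ⟨Sum.inr f, fun b => Sum.inl (k b)⟩
  | Sum.inr t =>
      ⟨(PFunctor.M.dest t).1, fun b => Sum.inr ((PFunctor.M.dest t).2 b)⟩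

/-- Application `tσ` of a substitution `σ : X → T` to a term `t`, defined corecursively. -/
def subst (σ : X → Tm Sg X) (t : Tm Sg X) : Tm Sg X :=
  PFunctor.M.corec (substAux σ) (Sum.inl t)

/-- `Occurs x t`: the variable `x` occurs in the term `t`. -/
inductive Occurs (x : X) : Tm Sg X → Prop
  | here {t : Tm Sg X} : t = Tm.var x → Occurs x t
  | deeper {t : Tm Sg X} {f : Sg.Sym} {args : Fin (Sg.ar f) → Tm Sg X}
      (i : Fin (Sg.ar f)) : t = Tm.node f args → Occurs x (args i) → Occurs x t

/-- A term rewriting system over `Sg` and `X`: a set of rules `ℓ → r` such that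
`ℓ` is not a variable and all variables of `r` occur in `ℓ`. -/
structure TRS (Sg : Signature) (X : Type) where
  rules : Set (Tm Sg X × Tm Sg X)
  lhs_not_var : ∀ l r, (l, r) ∈ rules → ∀ x : X, l ≠ Tm.var x
  vars_lhs : ∀ l r, (l, r) ∈ rules → ∀ x : X, Occurs x r → Occurs x l

/-- Relations on terms. -/
abbrev TRel (Sg : Signature) (X : Type) := Tm Sg X → Tm Sg X → Prop

/-- The root step relation `→ε := {(ℓσ, rσ) | ℓ → r ∈ R, σ a substitution}`. -/
def RootStep (R : TRS Sg X) : TRel Sg X := fun s t =>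
  ∃ l r, (l, r) ∈ R.rules ∧ ∃ σ : X → Tm Sg X, s = subst σ l ∧ t = subst σ r

/-- `StepAt Q p s t`: a `Q`-step at position `p`, i.e. `s = C[u]`, `t = C[v]` with
`(u,v) ∈ Q` and `C` a one-hole context whose hole is at position `p`. -/
inductive StepAt (Q : TRel Sg X) : List ℕ → Tm Sg X → Tm Sg X → Prop
  | here {s t : Tm Sg X} : Q s t → StepAt Q [] s t
  | deeper {f : Sg.Sym} {ss ts : Fin (Sg.ar f) → Tm Sg X} (i : Fin (Sg.ar f))
      {p : List ℕ} : StepAt Q p (ss i) (ts i) → (∀ j, j ≠ i → ss j = ts j) →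
      StepAt Q ((i : ℕ) :: p) (Tm.node f ss) (Tm.node f ts)

/-- The one-step rewrite relation `→` of a TRS: a root step applied inside a
one-hole context. -/
def Step (R : TRS Sg X) : TRel Sg X := fun s t => ∃ p, StepAt (RootStep R) p s t

/-- The lifting `↓R` of a relation `R`:
`↓R := {(f(s₁,…,sₙ), f(t₁,…,tₙ)) | f ∈ Σ, s₁ R t₁, …, sₙ R tₙ} ∪ Id`. -/
def liftRel (R : TRel Sg X) : TRel Sg X := fun s t =>
  s = t ∨ ∃ (f : Sg.Sym) (ss ts : Fin (Sg.ar f) → Tm Sg X),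
    s = Tm.node f ss ∧ t = Tm.node f ts ∧ ∀ i, R (ss i) (ts i)

lemma liftRel_mono : Monotone (liftRel (Sg := Sg) (X := X)) := by
  intro R S h s t hst
  rcases hst with h1 | ⟨f, ss, ts, rfl, rfl, hi⟩
  · exact Or.inl h1
  · exact Or.inr ⟨f, ss, ts, rfl, rfl, fun i => h _ _ (hi i)⟩

/-- Relational composition `r ∘ s`. -/
def relComp (r s : TRel Sg X) : TRel Sg X := fun a c => ∃ b, r a b ∧ s b c

/-- The monotone operator `S ↦ (→ε ∪ ↓R)* ∘ ↓S` (for a fixed `R`). -/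
def iredInnerHom (R : TRS Sg X) (U : TRel Sg X) : TRel Sg X →o TRel Sg X where
  toFun S := relComp
    (ReflTransGen (fun s t => RootStep R s t ∨ liftRel U s t)) (liftRel S)
  monotone' := by
    intro S S' h a c hac
    rcases hac with ⟨b, h1, h2⟩
    exact ⟨b, h1, liftRel_mono h _ _ h2⟩

/-- The monotone operator `R ↦ νS.((→ε ∪ ↓R)* ∘ ↓S)`. -/
def iredHom (R : TRS Sg X) : TRel Sg X →o TRel Sg X where
  toFun U := OrderHom.gfp (iredInnerHom R U)
  monotone' := by
    intro U V h
    apply OrderHom.gfp.monotone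
    intro S a c hac
    rcases hac with ⟨b, h1, h2⟩
    refine ⟨b, ?_, h2⟩
    refine ReflTransGen.mono ?_ _ _ h1
    exact (fun x y hxy => hxy.imp id (fun h' => liftRel_mono h _ _ h'))

/-- The infinitary rewrite relation `→∞ := μR.νS.((→ε ∪ ↓R)* ∘ ↓S)`. -/
def ired (R : TRS Sg X) : TRel Sg X := OrderHom.lfp (iredHom R)

/-- The monotone operator `R' ↦ (→ε ∪ ↓R')*`. -/
def biHom (R : TRS Sg X) : TRel Sg X →o TRel Sg X where
  toFun U := ReflTransGen (fun s t => RootStep R s t ∨ liftRel U s t)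
  monotone' := by
    intro U V h a b hab
    refine ReflTransGen.mono ?_ _ _ hab
    exact (fun x y hxy => hxy.imp id (fun h' => liftRel_mono h _ _ h'))

/-- The bi-infinite rewrite relation `∞→ := νR.(→ε ∪ ↓R)*`. -/
def bired (R : TRS Sg X) : TRel Sg X := OrderHom.gfp (biHom R)

/-- The monotone operator `R' ↦ (←ε ∪ →ε ∪ ↓R')*`. -/
def ieqHom (R : TRS Sg X) : TRel Sg X →o TRel Sg X where
  toFun U := ReflTransGen (fun s t => RootStep R t s ∨ RootStep R s t ∨ liftRel U s t)
  monotone' := by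
    intro U V h a b hab
    refine ReflTransGen.mono ?_ _ _ hab
    exact
      (fun x y hxy => hxy.imp id (fun h' => h'.imp id (fun h'' => liftRel_mono h _ _ h'')))

/-- The infinitary equational reasoning relation `=∞ := νR.(←ε ∪ →ε ∪ ↓R)*`. -/
def ieq (R : TRS Sg X) : TRel Sg X := OrderHom.gfp (ieqHom R)

/-- `Agree n s t`: the terms `s` and `t` coincide up to depth `n`
(i.e. `d(s,t) ≤ 2^{-n}` for the standard metric `d`). -/
def Agree : ℕ → Tm Sg X → Tm Sg X → Prop
  | 0, _, _ => True
  | n + 1, s, t =>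
      (∃ x : X, s = Tm.var x ∧ t = Tm.var x) ∨
      ∃ (f : Sg.Sym) (ss ts : Fin (Sg.ar f) → Tm Sg X),
        s = Tm.node f ss ∧ t = Tm.node f ts ∧ ∀ i, Agree n (ss i) (ts i)

/-- `ConvTo t p l tl`: as `β` approaches the ordinal `l` from below,
`d(t β, tl)` tends to `0` and the depth `|p β|` tends to infinity. -/
def ConvTo (t : Ordinal.{0} → Tm Sg X) (p : Ordinal.{0} → List ℕ) (l : Ordinal.{0})
    (tl : Tm Sg X) : Prop :=
  (∀ n : ℕ, ∃ β₀ < l, ∀ β, β₀ ≤ β → β < l → Agree n (t β) tl) ∧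
  (∀ n : ℕ, ∃ β₀ < l, ∀ β, β₀ ≤ β → β < l → n ≤ (p β).length)

/-- A transfinite sequence of `Q`-steps `(t_β →_{p_β} t_{β+1})_{β<α}` of ordinal
length `α`, weakly continuous and with depths tending to infinity at every limit
ordinal `λ < α`. -/
structure TransSeq (Q : TRel Sg X) (α : Ordinal.{0}) where
  t : Ordinal.{0} → Tm Sg X
  pos : Ordinal.{0} → List ℕ
  step : ∀ β < α, StepAt Q (pos β) (t β) (t (β + 1))
  conv : ∀ l < α, Order.IsSuccLimit l → ConvTo t pos l (t l)

/-- A transfinite rewrite sequence is strongly convergent if its length is a successor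
ordinal (or zero), or there exists a final term to which it converges (with depths
tending to infinity) at the limit. -/
def TransSeq.StronglyConvergent {Q : TRel Sg X} {α : Ordinal.{0}} (s : TransSeq Q α) : Prop :=
  Order.IsSuccLimit α → ∃ tl, ConvTo s.t s.pos α tl

/-- `SCRed Q s t`: there is a strongly convergent transfinite sequence of `Q`-steps
from `s` to `t`. -/
def SCRed (Q : TRel Sg X) : TRel Sg X := fun a b =>
  ∃ (α : Ordinal.{0}) (s : TransSeq Q α), s.t 0 = a ∧ s.t α = b ∧
    (Order.IsSuccLimit α → ConvTo s.t s.pos α b)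

/-- The standard, ordinal-based infinitary rewrite relation `→∞_ord`:
strongly convergent transfinite rewrite sequences. -/
def iredOrd (R : TRS Sg X) : TRel Sg X := SCRed (RootStep R)

-- auxiliary facts about the term constructors
lemma node_ne_var (f : Sg.Sym) (args : Fin (Sg.ar f) → Tm Sg X) (x : X) :
    Tm.node f args ≠ Tm.var x := by
  intro h
  have h1 := congrArg (fun u => (PFunctor.M.dest u).1) h
  simp only [Tm.node, Tm.var, PFunctor.M.dest_mk] at h1
  cases h1

lemma node_inj_sym {f g : Sg.Sym} {ss : Fin (Sg.ar f) → Tm Sg X}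
    {ts : Fin (Sg.ar g) → Tm Sg X} (h : Tm.node f ss = Tm.node g ts) : f = g := by
  have h1 := congrArg (fun u => (PFunctor.M.dest u).1) h
  simp only [Tm.node, PFunctor.M.dest_mk] at h1
  exact Sum.inr.inj h1

lemma node_inj_args {f : Sg.Sym} {ss ts : Fin (Sg.ar f) → Tm Sg X}
    (h : Tm.node f ss = Tm.node f ts) : ss = ts := by
  have h' : (PFunctor.M.mk ⟨Sum.inr f, ss⟩ : Tm Sg X) = PFunctor.M.mk ⟨Sum.inr f, ts⟩ := h
  have h1 := PFunctor.M.mk_inj h'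
  injection h1 with h2 h3

lemma var_inj {x y : X} (h : (Tm.var x : Tm Sg X) = Tm.var y) : x = y := by
  have h1 := congrArg (fun u => (PFunctor.M.dest u).1) h
  simp only [Tm.var, PFunctor.M.dest_mk] at h1
  exact Sum.inl.inj h1

lemma occurs_var_iff {x y : X} : Occurs x (Tm.var y : Tm Sg X) ↔ x = y := by
  constructor
  · intro h
    cases h with
    | here h => exact (var_inj h.symm)
    | deeper i h _ => exact absurd h.symm (node_ne_var _ _ _)
  · rintro rfl
    exact Occurs.here rfl

lemma occurs_node_iff {x : X} {f : Sg.Sym} {args : Fin (Sg.ar f) → Tm Sg X} :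
    Occurs x (Tm.node f args) ↔ ∃ i, Occurs x (args i) := by
  constructor
  · intro h
    cases h with
    | here h => exact absurd h (node_ne_var _ _ _)
    | deeper i h hocc =>
      obtain rfl := node_inj_sym h
      obtain rfl := node_inj_args h
      exact ⟨i, hocc⟩
  · rintro ⟨i, h⟩
    exact Occurs.deeper i rfl h

/-!
`∞→` and `=∞` are fixed points `U = Q(U)*` of a reflexive-transitive closure, so they are
reflexive and transitive on the nose; `=∞` is symmetric by coinduction, because its
generating step relation `←ε ∪ →ε ∪ ↓U` is symmetric whenever `U` is.

For `→∞ = μR.νS.((→ε ∪ ↓R)* ∘ ↓S)`, transitivity is proved by induction on the least fixed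
point, with the relation `T b c :⇔ ∀ a, a →∞ b → a →∞ c` as the invariant. To show
`νS.((→ε ∪ ↓T)* ∘ ↓S) ⊆ T` one checks by coinduction that `→∞ ∘ νS.((→ε ∪ ↓T)* ∘ ↓S)` is a
post-fixed point of the operator defining `→∞`: the finite prefix `(→ε ∪ ↓T)*` is absorbed
into `→∞` step by step, and the remaining lifted steps compose argumentwise.
-/

section LiftRel

lemma liftRel_refl (S : TRel Sg X) (a : Tm Sg X) : liftRel S a a :=
  Or.inl rfl

lemma liftRel_comp_le {P Q K : TRel Sg X} (hP : P ≤ K) (hQ : Q ≤ K)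
    (hPQ : relComp P Q ≤ K) : relComp (liftRel P) (liftRel Q) ≤ liftRel K := by
  rintro a c ⟨b, rfl | ⟨f, ss, ts, rfl, rfl, hst⟩, hbc⟩
  · exact liftRel_mono hQ _ _ hbc
  · rcases hbc with rfl | ⟨g, ts', us, heq, rfl, htu⟩
    · exact liftRel_mono hP _ _ (Or.inr ⟨f, ss, ts, rfl, rfl, hst⟩)
    · obtain rfl := node_inj_sym heq
      obtain rfl := node_inj_args heq
      exact Or.inr ⟨f, ss, us, rfl, rfl, fun i => hPQ _ _ ⟨ts i, hst i, htu i⟩⟩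

lemma liftRel_swap {S : TRel Sg X} {a b : Tm Sg X} (h : liftRel S a b) :
    liftRel (Function.swap S) b a := by
  rcases h with rfl | ⟨f, ss, ts, rfl, rfl, hst⟩
  · exact liftRel_refl _ _
  · exact Or.inr ⟨f, ts, ss, rfl, rfl, hst⟩

end LiftRel

variable (R : TRS Sg X)

section InfinitaryRewriting

lemma ired_eq_gfp : ired R = OrderHom.gfp (iredInnerHom R (ired R)) :=
  (OrderHom.map_lfp (iredHom R)).symm

lemma ired_unfold : ired R = iredInnerHom R (ired R) (ired R) := by
  conv_lhs => rw [ired_eq_gfp, ← OrderHom.map_gfp, ← ired_eq_gfp]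

lemma ired_coinduct {S : TRel Sg X} (h : S ≤ iredInnerHom R (ired R) S) : S ≤ ired R :=
  (ired_eq_gfp R).symm ▸ OrderHom.le_gfp _ h

lemma gfp_iredInnerHom_refl (U : TRel Sg X) (a : Tm Sg X) :
    OrderHom.gfp (iredInnerHom R U) a a := by
  rw [← OrderHom.map_gfp]
  exact ⟨a, ReflTransGen.refl, liftRel_refl _ a⟩

lemma ired_refl (a : Tm Sg X) : ired R a a := by
  rw [ired_eq_gfp]
  exact gfp_iredInnerHom_refl R _ a

def iredRightAbsorbed : TRel Sg X := fun b c => ∀ a, ired R a b → ired R a c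

lemma iredRightAbsorbed_le : iredRightAbsorbed R ≤ ired R :=
  fun b _ h => h b (ired_refl R b)

lemma ired_of_ired_of_step {a b c : Tm Sg X} (hab : ired R a b)
    (hbc : RootStep R b c ∨ liftRel (iredRightAbsorbed R) b c) : ired R a c := by
  rw [ired_unfold] at hab ⊢
  obtain ⟨a', haa', ha'b⟩ := hab
  rcases hbc with hroot | hlift
  · exact ⟨c, (haa'.tail (Or.inr ha'b)).tail (Or.inl hroot), liftRel_refl _ c⟩
  · refine ⟨a', haa', liftRel_comp_le le_rfl (iredRightAbsorbed_le R) ?_ _ _ ⟨b, ha'b, hlift⟩⟩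
    rintro x z ⟨y, hxy, hyz⟩
    exact hyz x hxy

lemma ired_of_ired_of_reflTransGen {a b c : Tm Sg X} (hab : ired R a b)
    (hbc : ReflTransGen (fun s t => RootStep R s t ∨ liftRel (iredRightAbsorbed R) s t) b c) :
    ired R a c := by
  induction hbc with
  | refl => exact hab
  | tail _ hstep ih => exact ired_of_ired_of_step R ih hstep

lemma ired_comp_gfp_le :
    relComp (ired R) (OrderHom.gfp (iredInnerHom R (iredRightAbsorbed R))) ≤ ired R := by
  set G := OrderHom.gfp (iredInnerHom R (iredRightAbsorbed R)) with hG
  refine ired_coinduct R ?_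
  rintro a c ⟨b, hab, hbc⟩
  rw [hG, ← OrderHom.map_gfp] at hbc
  obtain ⟨b', hbb', hb'c⟩ := hbc
  have hab' := ired_of_ired_of_reflTransGen R hab hbb'
  rw [ired_unfold] at hab'
  obtain ⟨a', haa', ha'b'⟩ := hab'
  refine ⟨a', haa', liftRel_comp_le (K := relComp (ired R) G) ?_ ?_ le_rfl _ _ ⟨b', ha'b', hb'c⟩⟩
  · exact fun x y h => ⟨y, h, gfp_iredInnerHom_refl R _ y⟩
  · exact fun x y h => ⟨x, ired_refl R x, h⟩

lemma ired_trans {a b c : Tm Sg X} (hab : ired R a b) (hbc : ired R b c) : ired R a c := by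
  have hind : ired R ≤ iredRightAbsorbed R :=
    OrderHom.lfp_le _ fun b c hbc a hab => ired_comp_gfp_le R a c ⟨b, hab, hbc⟩
  exact hind b c hbc a hab

end InfinitaryRewriting

section BiInfiniteRewriting

lemma bired_eq :
    bired R = ReflTransGen (fun s t => RootStep R s t ∨ liftRel (bired R) s t) :=
  (OrderHom.map_gfp (biHom R)).symm

lemma bired_refl (a : Tm Sg X) : bired R a a :=
  bired_eq R ▸ ReflTransGen.refl

lemma bired_trans {a b c : Tm Sg X} (hab : bired R a b) (hbc : bired R b c) :
    bired R a c := by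
  rw [bired_eq] at hab hbc ⊢; exact hab.trans hbc

end BiInfiniteRewriting

section InfinitaryEquationalReasoning

lemma ieq_eq :
    ieq R = ReflTransGen
      (fun s t => RootStep R t s ∨ RootStep R s t ∨ liftRel (ieq R) s t) :=
  (OrderHom.map_gfp (ieqHom R)).symm

lemma ieq_refl (a : Tm Sg X) : ieq R a a :=
  ieq_eq R ▸ ReflTransGen.refl

lemma ieq_trans {a b c : Tm Sg X} (hab : ieq R a b) (hbc : ieq R b c) : ieq R a c := by
  rw [ieq_eq] at hab hbc ⊢; exact hab.trans hbc

lemma ieq_symm {a b : Tm Sg X} (h : ieq R a b) : ieq R b a := by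
  have hpost : Function.swap (ieq R) ≤ ieqHom R (Function.swap (ieq R)) := by
    intro a b hba
    rw [ieq_eq] at hba
    refine ReflTransGen.mono ?_ _ _ (ReflTransGen.swap _ _ hba)
    rintro x y (hroot | hroot | hlift)
    · exact Or.inr (Or.inl hroot)
    · exact Or.inl hroot
    · exact Or.inr (Or.inr (liftRel_swap hlift))
  exact OrderHom.le_gfp _ hpost b a h

end InfinitaryEquationalReasoning

theorem refl_trans_symm_general (Sg : Signature) (X : Type) (R : TRS Sg X) :
    Reflexive (ired R) ∧ Transitive (ired R) ∧
    Reflexive (bired R) ∧ Transitive (bired R) ∧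
    Reflexive (ieq R) ∧ Transitive (ieq R) ∧ Symmetric (ieq R) ∧
    Equivalence (ieq R) :=
  ⟨ired_refl R, fun _ _ _ => ired_trans R, bired_refl R, fun _ _ _ => bired_trans R,
    ieq_refl R, fun _ _ _ => ieq_trans R, fun _ _ => ieq_symm R,
    ⟨ieq_refl R, ieq_symm R, ieq_trans R⟩⟩

/-- For every TRS `R`, each of the relations `→∞`, `∞→` and `=∞` is
reflexive and transitive, and `=∞` is moreover symmetric, hence an equivalence
relation on the set of terms. -/
theorem refl_trans_symm (Sg : Signature) (X : Type) [Infinite X] (R : TRS Sg X) :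
    Reflexive (ired R) ∧ Transitive (ired R) ∧
    Reflexive (bired R) ∧ Transitive (bired R) ∧
    Reflexive (ieq R) ∧ Transitive (ieq R) ∧ Symmetric (ieq R) ∧
    Equivalence (ieq R) :=
  refl_trans_symm_general Sg X R
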